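/- Let X be a (75,32,10,16) strongly regular graph with a 4-clique K whose outside-degree distribution is (b_0,b_1,b_2,b_3)=(2,23,45,1) with b_4=0, and x0, x1 the two vertices with 0 neighbors in K. Then x0 and x1 each have exactly one neighbor among the vertices with exactly 1 neighbor in K, and these two neighbors are distinct. -/

import Mathlib

open Finset

/-- The number of neighbors of `x` inside the vertex set `K`. -/
def nbrs {V : Type*} [DecidableEq V] (G : SimpleGraph V) [DecidableRel G.Adj]
    (K : Finset V) (x : V) : ℕ :=
  (K.filter (fun y => G.Adj x y)).card

/-- The number of vertices outside `K` with exactly `i` neighbors in `K`. -/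
def bcount {V : Type*} [Fintype V] [DecidableEq V] (G : SimpleGraph V) [DecidableRel G.Adj]
    (K : Finset V) (i : ℕ) : ℕ :=
  ((univ \ K).filter (fun x => nbrs G K x = i)).card

/-!
Say a vertex outside `K` has type `i` if it has `i` neighbours in `K`. Let `x` be `x0` or `x1`
and `aᵢ` the number of its neighbours of type `i`. All neighbours of `x` lie outside `K`, and as
`x0, x1` are the only vertices of type 0, `x3` the only one of type 3 and none has type 4, every
neighbour of `x` other than `x3` has type 1 or 2. Counting the `32` neighbours of `x` and their
`4 * 16` edges into `K` (each vertex of `K` has `μ = 16` common neighbours with `x`) gives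
`a₁ + a₂ + 1 = 32` and `a₁ + 2 a₂ + 3 = 64`, so `a₁ = 1` and `a₂ = 30`. If `x0` and `x1` shared
their neighbour of type 1, their `16` common neighbours would contain it, `x3`, and at least
`30 + 30 - 45 = 15` common neighbours of type 2.
-/

lemma Finset.card_eq_card_filter_eq_one_add_card_filter_eq_two {ι : Type*} {s : Finset ι}
    {f : ι → ℕ} (hs : ∀ i ∈ s, f i = 1 ∨ f i = 2) :
    #s = #{i ∈ s | f i = 1} + #{i ∈ s | f i = 2} := by
  have hmaps : ∀ i ∈ s, f i ∈ ({1, 2} : Finset ℕ) := by simpa using hs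
  rw [card_eq_sum_card_fiberwise hmaps, sum_pair (by norm_num)]

lemma Finset.sum_eq_card_filter_eq_one_add_two_mul_card_filter_eq_two {ι : Type*}
    {s : Finset ι} {f : ι → ℕ} (hs : ∀ i ∈ s, f i = 1 ∨ f i = 2) :
    ∑ i ∈ s, f i = #{i ∈ s | f i = 1} + 2 * #{i ∈ s | f i = 2} := by
  have hmaps : ∀ i ∈ s, f i ∈ ({1, 2} : Finset ℕ) := by simpa using hs
  rw [← sum_fiberwise_of_maps_to hmaps, sum_pair (by norm_num),
    sum_const_nat fun i hi => (mem_filter.mp hi).2,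
    sum_const_nat fun i hi => (mem_filter.mp hi).2]
  ring

open SimpleGraph

section

variable {V : Type*} [DecidableEq V] {G : SimpleGraph V} [DecidableRel G.Adj]
  {K : Finset V} {x z : V}

variable (G) in
lemma nbrs_le_card (K : Finset V) (x : V) : nbrs G K x ≤ #K := card_filter_le _ _

lemma notMem_of_adj_of_nbrs_eq_zero (hx : nbrs G K x = 0) (hz : G.Adj x z) : z ∉ K :=
  fun hzK => filter_eq_empty_iff.mp (card_eq_zero.mp hx) hzK hz

variable [Fintype V] {n k ℓ μ : ℕ}

lemma eq_of_bcount_eq_one {i : ℕ} {x' : V} (h : bcount G K i = 1) (hx'K : x' ∉ K)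
    (hx' : nbrs G K x' = i) (hzK : z ∉ K) (hz : nbrs G K z = i) : z = x' :=
  card_le_one.mp h.le z (by simp [hzK, hz]) x' (by simp [hx'K, hx'])

lemma eq_or_eq_of_bcount_eq_two {i : ℕ} {x₀ x₁ : V} (h : bcount G K i = 2) (hne : x₀ ≠ x₁)
    (hx₀K : x₀ ∉ K) (hx₀ : nbrs G K x₀ = i) (hx₁K : x₁ ∉ K) (hx₁ : nbrs G K x₁ = i)
    (hzK : z ∉ K) (hz : nbrs G K z = i) : z = x₀ ∨ z = x₁ := by
  by_contra! hz'
  have hsub : {z, x₀, x₁} ⊆ (univ \ K).filter (fun y => nbrs G K y = i) := by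
    simp [insert_subset_iff, hzK, hz, hx₀K, hx₀, hx₁K, hx₁]
  have := card_le_card hsub
  rw [card_insert_of_notMem (by simp [hz'.1, hz'.2]), card_pair hne] at this
  rw [bcount] at h
  omega

lemma nbrs_ne_of_bcount_eq_zero {i : ℕ} (h : bcount G K i = 0) (hzK : z ∉ K) :
    nbrs G K z ≠ i :=
  fun hz => filter_eq_empty_iff.mp (card_eq_zero.mp h) (mem_sdiff.mpr ⟨mem_univ z, hzK⟩) hz

lemma filter_sdiff_and_adj_eq_filter_neighborFinset (hx : nbrs G K x = 0) (p : V → Prop)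
    [DecidablePred p] :
    (univ \ K).filter (fun y => p y ∧ G.Adj x y) = (G.neighborFinset x).filter p := by
  ext z
  simp only [mem_filter, mem_sdiff, mem_univ, true_and, mem_neighborFinset]
  exact ⟨fun ⟨_, hp, hz⟩ => ⟨hz, hp⟩,
    fun ⟨hz, hp⟩ => ⟨notMem_of_adj_of_nbrs_eq_zero hx hz, hp, hz⟩⟩

lemma sum_nbrs_neighborFinset (K : Finset V) (x : V) :
    ∑ z ∈ G.neighborFinset x, nbrs G K z =
      ∑ v ∈ K, #(G.neighborFinset x ∩ G.neighborFinset v) := by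
  simp only [nbrs, card_filter]
  rw [sum_comm]
  refine sum_congr rfl fun v _ => ?_
  rw [← card_filter]
  congr 1
  ext z
  simp [adj_comm]

theorem SimpleGraph.IsSRGWith.card_neighborFinset_inter_of_not_adj (h : G.IsSRGWith n k ℓ μ)
    {v w : V} (hne : v ≠ w) (ha : ¬G.Adj v w) :
    #(G.neighborFinset v ∩ G.neighborFinset w) = μ := by
  rw [← h.of_not_adj hne ha, ← Set.toFinset_card]
  congr 1
  ext z
  simp [mem_commonNeighbors]

theorem SimpleGraph.IsSRGWith.sum_nbrs_neighborFinset_of_nbrs_eq_zero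
    (h : G.IsSRGWith n k ℓ μ) (hxK : x ∉ K) (hx : nbrs G K x = 0) :
    ∑ z ∈ G.neighborFinset x, nbrs G K z = μ * #K := by
  rw [sum_nbrs_neighborFinset, sum_const_nat fun v hv => ?_, mul_comm]
  exact h.card_neighborFinset_inter_of_not_adj (ne_of_mem_of_not_mem hv hxK).symm
    fun hxv => notMem_of_adj_of_nbrs_eq_zero hx hxv hv

theorem SimpleGraph.IsSRGWith.card_and_sum_nbrs_neighborFinset (h : G.IsSRGWith n k ℓ μ)
    {x₃ : V} (hxK : x ∉ K) (hx : nbrs G K x = 0) (hxx₃ : G.Adj x x₃) (hx₃ : nbrs G K x₃ = 3)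
    (htypes : ∀ z, G.Adj x z → z ≠ x₃ → nbrs G K z = 1 ∨ nbrs G K z = 2) :
    #{z ∈ G.neighborFinset x | nbrs G K z = 1} +
        #{z ∈ G.neighborFinset x | nbrs G K z = 2} + 1 = k ∧
      #{z ∈ G.neighborFinset x | nbrs G K z = 1} +
        2 * #{z ∈ G.neighborFinset x | nbrs G K z = 2} + 3 = μ * #K := by
  set s := (G.neighborFinset x).erase x₃
  have hx₃s : x₃ ∈ G.neighborFinset x := (mem_neighborFinset _ _ _).mpr hxx₃
  have hfilter : ∀ i ≠ 3,
      {z ∈ G.neighborFinset x | nbrs G K z = i} = {z ∈ s | nbrs G K z = i} :=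
    fun i hi => by rw [filter_erase, erase_eq_of_notMem (by simp [hx₃, hi.symm])]
  have hs : ∀ z ∈ s, nbrs G K z = 1 ∨ nbrs G K z = 2 := fun z hz =>
    htypes z ((mem_neighborFinset _ _ _).mp (mem_of_mem_erase hz)) (ne_of_mem_erase hz)
  rw [hfilter 1 (by norm_num), hfilter 2 (by norm_num)]
  constructor
  · rw [← card_eq_card_filter_eq_one_add_card_filter_eq_two hs, card_erase_add_one hx₃s,
      card_neighborFinset_eq_degree, h.regular.degree_eq]
  · rw [← sum_eq_card_filter_eq_one_add_two_mul_card_filter_eq_two hs, ← hx₃,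
      sum_erase_add _ _ hx₃s, h.sum_nbrs_neighborFinset_of_nbrs_eq_zero hxK hx]

theorem SimpleGraph.IsSRGWith.card_filter_neighborFinset_add_le (h : G.IsSRGWith n k ℓ μ)
    {x₀ x₁ : V} (hne : x₀ ≠ x₁) (hnadj : ¬G.Adj x₀ x₁) (hx₀ : nbrs G K x₀ = 0)
    (hx₁ : nbrs G K x₁ = 0) {i : ℕ} {S : Finset V}
    (hS : S ⊆ G.neighborFinset x₀ ∩ G.neighborFinset x₁) (hSi : ∀ z ∈ S, nbrs G K z ≠ i) :
    #{z ∈ G.neighborFinset x₀ | nbrs G K z = i} + #{z ∈ G.neighborFinset x₁ | nbrs G K z = i} +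
      #S ≤ bcount G K i + μ := by
  set T₀ := {z ∈ G.neighborFinset x₀ | nbrs G K z = i}
  set T₁ := {z ∈ G.neighborFinset x₁ | nbrs G K z = i}
  have hT : ∀ {y}, nbrs G K y = 0 →
      {z ∈ G.neighborFinset y | nbrs G K z = i} ⊆ (univ \ K).filter (fun z => nbrs G K z = i) :=
    fun hy => by
      rw [← filter_sdiff_and_adj_eq_filter_neighborFinset hy]
      exact monotone_filter_right _ fun _ _ => And.left
  have hunion : #(T₀ ∪ T₁) ≤ bcount G K i := card_le_card (union_subset (hT hx₀) (hT hx₁))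
  have hdisj : Disjoint (T₀ ∩ T₁) S := Finset.disjoint_left.mpr fun z hz hzS =>
    hSi z hzS (mem_filter.mp (mem_inter.mp hz).1).2
  have hcommon : #(T₀ ∩ T₁) + #S ≤ μ := by
    rw [← card_union_of_disjoint hdisj, ← h.card_neighborFinset_inter_of_not_adj hne hnadj]
    exact card_le_card (union_subset (inter_subset_inter (filter_subset _ _)
      (filter_subset _ _)) hS)
  have := card_union_add_card_inter T₀ T₁
  omega

end

theorem stmt8_general {V : Type*} [Fintype V] [DecidableEq V]
    (G : SimpleGraph V) [DecidableRel G.Adj]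
    (hG : G.IsSRGWith 75 32 10 16)
    (K : Finset V) (hK : G.IsNClique 4 K)
    (hb0 : bcount G K 0 = 2)
    (hb2 : bcount G K 2 = 45) (hb3 : bcount G K 3 = 1) (hb4 : bcount G K 4 = 0)
    (x0 x1 x3 : V) (hne : x0 ≠ x1)
    (hx0K : x0 ∉ K) (hx0 : nbrs G K x0 = 0)
    (hx1K : x1 ∉ K) (hx1 : nbrs G K x1 = 0)
    (hx3K : x3 ∉ K) (hx3 : nbrs G K x3 = 3)
    (hnadj : ¬ G.Adj x0 x1) (h03 : G.Adj x0 x3) (h13 : G.Adj x1 x3) :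
    (((univ \ K).filter (fun y => nbrs G K y = 1 ∧ G.Adj x0 y)).card = 1) ∧
    (((univ \ K).filter (fun y => nbrs G K y = 1 ∧ G.Adj x1 y)).card = 1) ∧
    ((univ \ K).filter (fun y => nbrs G K y = 1 ∧ G.Adj x0 y) ≠
      (univ \ K).filter (fun y => nbrs G K y = 1 ∧ G.Adj x1 y)) := by
  have htypes : ∀ x, nbrs G K x = 0 → ¬G.Adj x x0 → ¬G.Adj x x1 →
      ∀ z, G.Adj x z → z ≠ x3 → nbrs G K z = 1 ∨ nbrs G K z = 2 := by
    intro x hx hxx0 hxx1 z hxz hz3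
    have hzK := notMem_of_adj_of_nbrs_eq_zero hx hxz
    have hz0 : nbrs G K z ≠ 0 := fun h => by
      rcases eq_or_eq_of_bcount_eq_two hb0 hne hx0K hx0 hx1K hx1 hzK h with rfl | rfl <;>
        contradiction
    have hz3' : nbrs G K z ≠ 3 := fun h => hz3 (eq_of_bcount_eq_one hb3 hx3K hx3 hzK h)
    have := nbrs_ne_of_bcount_eq_zero hb4 hzK
    have := hK.card_eq ▸ nbrs_le_card G K z
    omega
  obtain ⟨hcard₀, hsum₀⟩ := hG.card_and_sum_nbrs_neighborFinset hx0K hx0 h03 hx3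
    (htypes x0 hx0 (G.irrefl) hnadj)
  obtain ⟨hcard₁, hsum₁⟩ := hG.card_and_sum_nbrs_neighborFinset hx1K hx1 h13 hx3
    (htypes x1 hx1 (fun h => hnadj h.symm) (G.irrefl))
  rw [hK.card_eq] at hsum₀ hsum₁
  rw [filter_sdiff_and_adj_eq_filter_neighborFinset hx0,
    filter_sdiff_and_adj_eq_filter_neighborFinset hx1]
  refine ⟨by omega, by omega, fun heq => ?_⟩
  obtain ⟨y, hy⟩ := card_eq_one.mp (show #{z ∈ G.neighborFinset x0 | nbrs G K z = 1} = 1 by omega)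
  have hy₀ : y ∈ {z ∈ G.neighborFinset x0 | nbrs G K z = 1} := hy ▸ mem_singleton_self y
  have hy₁ : y ∈ {z ∈ G.neighborFinset x1 | nbrs G K z = 1} := heq ▸ hy₀
  simp only [mem_filter, mem_neighborFinset] at hy₀ hy₁
  have hyx3 : y ≠ x3 := by rintro rfl; omega
  have := hG.card_filter_neighborFinset_add_le hne hnadj hx0 hx1 (i := 2) (S := {y, x3})
    (by simp [insert_subset_iff, hy₀.1, hy₁.1, h03, h13]) (by simp [hy₀.2, hx3])
  rw [card_pair hyx3, hb2] at this
  omega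

/-- Case (2,23,45,1): each of `x0, x1` (the vertices with no neighbor in the
4-clique `K`) has exactly one neighbor among the vertices with exactly 1
neighbor in `K`, and these two neighbors are distinct. -/
theorem stmt8 {V : Type*} [Fintype V] [DecidableEq V]
    (G : SimpleGraph V) [DecidableRel G.Adj]
    (hG : G.IsSRGWith 75 32 10 16)
    (K : Finset V) (hK : G.IsNClique 4 K)
    (hb0 : bcount G K 0 = 2) (hb1 : bcount G K 1 = 23)
    (hb2 : bcount G K 2 = 45) (hb3 : bcount G K 3 = 1) (hb4 : bcount G K 4 = 0)
    (x0 x1 x3 : V) (hne : x0 ≠ x1)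
    (hx0K : x0 ∉ K) (hx0 : nbrs G K x0 = 0)
    (hx1K : x1 ∉ K) (hx1 : nbrs G K x1 = 0)
    (hx3K : x3 ∉ K) (hx3 : nbrs G K x3 = 3)
    (hnadj : ¬ G.Adj x0 x1) (h03 : G.Adj x0 x3) (h13 : G.Adj x1 x3) :
    (((univ \ K).filter (fun y => nbrs G K y = 1 ∧ G.Adj x0 y)).card = 1) ∧
    (((univ \ K).filter (fun y => nbrs G K y = 1 ∧ G.Adj x1 y)).card = 1) ∧
    ((univ \ K).filter (fun y => nbrs G K y = 1 ∧ G.Adj x0 y) ≠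
      (univ \ K).filter (fun y => nbrs G K y = 1 ∧ G.Adj x1 y)) :=
  stmt8_general G hG K hK hb0 hb2 hb3 hb4 x0 x1 x3 hne hx0K hx0 hx1K hx1 hx3K hx3 hnadj h03 h13
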